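/- Let n ≥ 2 and S ⊆ ℤ^n. Then S is closed under some majority operation if and only if there exists a majority operation g : ℤ³ → ℤ such that S = ⋈_{1≤i<j≤n} cl_g(π_{i,j}(S)). -/

import Mathlib

/-- Componentwise closedness of a set of `ι`-indexed integer vectors under a
`k`-ary operation `f : ℤ^k → ℤ`. -/
def CptClosed {k : ℕ} {ι : Type*} (f : (Fin k → ℤ) → ℤ) (S : Set (ι → ℤ)) : Prop :=
  ∀ x : Fin k → ι → ℤ, (∀ l, x l ∈ S) → (fun i => f (fun l => x l i)) ∈ S

/-- `f : ℤ³ → ℤ` is a majority operation. -/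
def IsMajorityOp (f : (Fin 3 → ℤ) → ℤ) : Prop :=
  ∀ a b : ℤ, f ![a, a, b] = a ∧ f ![a, b, a] = a ∧ f ![b, a, a] = a

/-- `S` is closed under some majority operation. -/
def MajClosed {ι : Type*} (S : Set (ι → ℤ)) : Prop :=
  ∃ f : (Fin 3 → ℤ) → ℤ, IsMajorityOp f ∧ CptClosed f S

/-- The projection `π_{i,j}(x) = (x_i, x_j)`. -/
def proj2 {n : ℕ} (i j : Fin n) (x : Fin n → ℤ) : Fin 2 → ℤ := ![x i, x j]

/-- The projection `π_{i,j}(S)`. -/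
def projSet {n : ℕ} (i j : Fin n) (S : Set (Fin n → ℤ)) : Set (Fin 2 → ℤ) :=
  proj2 i j '' S

/-- The join `⋈_{1 ≤ i < j ≤ n} F i j`. -/
def joinPairs {n : ℕ} (F : Fin n → Fin n → Set (Fin 2 → ℤ)) : Set (Fin n → ℤ) :=
  {x | ∀ i j : Fin n, i < j → proj2 i j x ∈ F i j}

/-- The `f`-closure of `S`: the intersection of all `f`-closed supersets of `S`. -/
def clOp {k m : ℕ} (f : (Fin k → ℤ) → ℤ) (S : Set (Fin m → ℤ)) : Set (Fin m → ℤ) :=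
  ⋂₀ {T | S ⊆ T ∧ CptClosed f T}

/-- The directed discrete midpoint operation `μ`. -/
def muOp : (Fin 2 → ℤ) → ℤ := fun t =>
  if t 1 ≤ t 0 then ⌈((t 0 + t 1 : ℤ) : ℚ) / 2⌉ else ⌊((t 0 + t 1 : ℤ) : ℚ) / 2⌋

/-- The operation `g(x,y) = ⌈(x+y)/2⌉`. -/
def ceilAvgOp : (Fin 2 → ℤ) → ℤ := fun t => ⌈((t 0 + t 1 : ℤ) : ℚ) / 2⌉

/-- The operation `h(x,y) = ⌊(x+y)/2⌋`. -/
def floorAvgOp : (Fin 2 → ℤ) → ℤ := fun t => ⌊((t 0 + t 1 : ℤ) : ℚ) / 2⌋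

/-- The median operation on three integers. -/
def medianOp : (Fin 3 → ℤ) → ℤ := fun t =>
  max (max (min (t 0) (t 1)) (min (t 1) (t 2))) (min (t 0) (t 2))

/-- The canonical embedding `ℤ^m → ℝ^m`. -/
def toR {m : ℕ} (z : Fin m → ℤ) : Fin m → ℝ := fun l => (z l : ℝ)

/-- The integer neighborhood `N(x)` of a real vector `x`. -/
def intNbhd {m : ℕ} (x : Fin m → ℝ) : Set (Fin m → ℤ) :=
  {z | ∀ j, |(z j : ℝ) - x j| < 1}

/-- `S` is midpoint-neighbor-closed: for all `x, y ∈ S`, `N((x+y)/2) ⊆ S`. -/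
def MidpointNeighborClosed {m : ℕ} (S : Set (Fin m → ℤ)) : Prop :=
  ∀ x ∈ S, ∀ y ∈ S, ∀ z : Fin m → ℤ,
    (∀ j, |(z j : ℝ) - ((x j : ℝ) + (y j : ℝ)) / 2| < 1) → z ∈ S

/-- `S ⊆ ℤ^m` is integrally convex. -/
def IntegrallyConvex {m : ℕ} (S : Set (Fin m → ℤ)) : Prop :=
  ∀ x : Fin m → ℝ, x ∈ convexHull ℝ (toR '' S) →
    x ∈ convexHull ℝ (toR '' (S ∩ intNbhd x))

/-- The closed convex closure of `T ⊆ ℤ^m` inside `ℝ^m`: the intersection of all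
topologically closed convex sets containing `T`. -/
def closedConvexClosure {m : ℕ} (T : Set (Fin m → ℤ)) : Set (Fin m → ℝ) :=
  ⋂₀ {C : Set (Fin m → ℝ) | Convex ℝ C ∧ IsClosed C ∧ toR '' T ⊆ C}

/-- `S = cl_conv̄(S) ∩ ℤ^m`. -/
def ClosedConvexIntegral {m : ℕ} (S : Set (Fin m → ℤ)) : Prop :=
  S = {z : Fin m → ℤ | toR z ∈ closedConvexClosure S}

/-- All entries of `A` lie in `{0, -1, +1}`. -/
def UnitMatrix {mR n : ℕ} (A : Matrix (Fin mR) (Fin n) ℤ) : Prop :=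
  ∀ i j, A i j = 0 ∨ A i j = -1 ∨ A i j = 1

/-- Each row of `A` has at most `c` nonzero entries. -/
def RowSupportLE {mR n : ℕ} (A : Matrix (Fin mR) (Fin n) ℤ) (c : ℕ) : Prop :=
  ∀ i, {j | A i j ≠ 0}.ncard ≤ c

/-- `S` is representable by a UTVPI system. -/
def RepUTVPI {n : ℕ} (S : Set (Fin n → ℤ)) : Prop :=
  ∃ (mR : ℕ) (A : Matrix (Fin mR) (Fin n) ℤ) (b : Fin mR → ℝ),
    UnitMatrix A ∧ RowSupportLE A 2 ∧
    S = {x | ∀ i, b i ≤ ((∑ j, A i j * x j : ℤ) : ℝ)}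

/-- `S` is representable by an SVPI system. -/
def RepSVPI {n : ℕ} (S : Set (Fin n → ℤ)) : Prop :=
  ∃ (mR : ℕ) (A : Matrix (Fin mR) (Fin n) ℤ) (b : Fin mR → ℝ),
    UnitMatrix A ∧ RowSupportLE A 1 ∧
    S = {x | ∀ i, b i ≤ ((∑ j, A i j * x j : ℤ) : ℝ)}

/-- `S` is representable by a DC system. -/
def RepDC {n : ℕ} (S : Set (Fin n → ℤ)) : Prop :=
  ∃ (mR : ℕ) (A : Matrix (Fin mR) (Fin n) ℤ) (b : Fin mR → ℝ),
    UnitMatrix A ∧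
    (∀ i, {j | A i j = 1}.ncard ≤ 1) ∧ (∀ i, {j | A i j = -1}.ncard ≤ 1) ∧
    S = {x | ∀ i, b i ≤ ((∑ j, A i j * x j : ℤ) : ℝ)}

/-- `S` is representable by a TVPI system with possibly infinitely many inequalities. -/
def RepTVPIInf {n : ℕ} (S : Set (Fin n → ℤ)) : Prop :=
  ∃ (I : Type) (a1 a2 b : I → ℝ) (p q : I → Fin n),
    S = {x | ∀ i : I, b i ≤ a1 i * (x (p i) : ℝ) + a2 i * (x (q i) : ℝ)}

/-- `S` is 2-decomposable: `S = ⋈_{i<j} π_{i,j}(S)`. -/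
def TwoDecomposable {ι : Type*} [LinearOrder ι] (S : Set (ι → ℤ)) : Prop :=
  S = {x | ∀ i j : ι, i < j → ∃ s ∈ S, s i = x i ∧ s j = x j}

/-!
If `S` is closed under a majority operation `f`, so is every projection `π_{i,j}(S)`, hence
`cl_f(π_{i,j}(S)) = π_{i,j}(S)`, and `S` is determined by its binary projections
(Baker–Pixley): if `x` agrees with members of `S` on every pair of coordinates, then by
induction on `|I|` some member of `S` agrees with `x` on every finite set `I` of coordinates,
since members agreeing with `x` off three distinct points of `I` combine under `f` into one
agreeing with `x` on all of `I`. Conversely a join of `g`-closed binary relations is `g`-closed.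
-/

section Closure

variable {k m : ℕ} (f : (Fin k → ℤ) → ℤ)

lemma cptClosed_clOp (S : Set (Fin m → ℤ)) : CptClosed f (clOp f S) :=
  fun x hx _ hT => hT.2 x fun l => hx l _ hT

variable {f}

lemma CptClosed.clOp_eq {S : Set (Fin m → ℤ)} (hS : CptClosed f S) : clOp f S = S := by
  have hmem : S ∈ {T | S ⊆ T ∧ CptClosed f T} := ⟨subset_rfl, hS⟩
  exact (Set.sInter_subset_of_mem hmem).antisymm fun _ hx _ hT => hT.1 hx

end Closure

lemma mem_projSet_iff {n : ℕ} {i j : Fin n} {S : Set (Fin n → ℤ)} {x : Fin n → ℤ} :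
    proj2 i j x ∈ projSet i j S ↔ ∃ s ∈ S, s i = x i ∧ s j = x j := by
  simp only [projSet, proj2, Set.mem_image, Matrix.vecCons_inj, and_true]

lemma CptClosed.projSet {n k : ℕ} {f : (Fin k → ℤ) → ℤ} {S : Set (Fin n → ℤ)}
    (hS : CptClosed f S) (i j : Fin n) : CptClosed f (projSet i j S) := by
  intro x hx
  choose s hs hsx using hx
  refine ⟨fun idx => f fun l => s l idx, hS s hs, ?_⟩
  ext c
  fin_cases c <;> simp [proj2, ← hsx]

lemma cptClosed_joinPairs {n k : ℕ} {f : (Fin k → ℤ) → ℤ}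
    {F : Fin n → Fin n → Set (Fin 2 → ℤ)} (hF : ∀ i j, i < j → CptClosed f (F i j)) :
    CptClosed f (joinPairs F) := by
  intro x hx i j hij
  have hproj : proj2 i j (fun idx => f fun l => x l idx) =
      fun c => f fun l => proj2 i j (x l) c := by
    ext c
    fin_cases c <;> rfl
  change proj2 i j _ ∈ F i j
  rw [hproj]
  exact hF i j hij _ fun l => hx l i j hij

section Majority

variable {f : (Fin 3 → ℤ) → ℤ}

lemma IsMajorityOp.apply_eq_of_two {u v w a : ℤ} (hf : IsMajorityOp f)
    (h : u = a ∧ v = a ∨ u = a ∧ w = a ∨ v = a ∧ w = a) : f ![u, v, w] = a := by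
  rcases h with ⟨rfl, rfl⟩ | ⟨rfl, rfl⟩ | ⟨rfl, rfl⟩
  exacts [(hf _ _).1, (hf _ _).2.1, (hf _ _).2.2]

variable {ι : Type*} {S : Set (ι → ℤ)}

lemma CptClosed.apply_three (hS : CptClosed f S) {s₁ s₂ s₃ : ι → ℤ}
    (h₁ : s₁ ∈ S) (h₂ : s₂ ∈ S) (h₃ : s₃ ∈ S) : (fun i => f ![s₁ i, s₂ i, s₃ i]) ∈ S := by
  convert hS ![s₁, s₂, s₃] (by simp [Fin.forall_fin_succ, h₁, h₂, h₃]) using 3 with i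
  ext l
  fin_cases l <;> rfl

lemma IsMajorityOp.exists_mem_eqOn_finset [DecidableEq ι] (hf : IsMajorityOp f)
    (hS : CptClosed f S) {x : ι → ℤ} (hx : ∀ i j, ∃ s ∈ S, s i = x i ∧ s j = x j)
    (I : Finset ι) (hI : I.Nonempty) : ∃ s ∈ S, ∀ i ∈ I, s i = x i := by
  induction I using Finset.strongInduction with
  | H I ih =>
  by_cases hcard : I.card ≤ 2
  · have : I.card = 1 ∨ I.card = 2 := by have := hI.card_pos; omega
    rcases this with h | h
    · obtain ⟨a, rfl⟩ := Finset.card_eq_one.mp h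
      obtain ⟨s, hs, ha, -⟩ := hx a a
      exact ⟨s, hs, by simpa using ha⟩
    · obtain ⟨a, b, -, rfl⟩ := Finset.card_eq_two.mp h
      obtain ⟨s, hs, ha, hb⟩ := hx a b
      exact ⟨s, hs, by simp [ha, hb]⟩
  obtain ⟨a, b, c, ha, hb, hc, hab, hac, hbc⟩ := (Finset.two_lt_card_iff (s := I)).mp (by omega)
  obtain ⟨s₁, hs₁, hx₁⟩ := ih _ (Finset.erase_ssubset ha) ⟨b, Finset.mem_erase.mpr ⟨hab.symm, hb⟩⟩
  obtain ⟨s₂, hs₂, hx₂⟩ := ih _ (Finset.erase_ssubset hb) ⟨a, Finset.mem_erase.mpr ⟨hab, ha⟩⟩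
  obtain ⟨s₃, hs₃, hx₃⟩ := ih _ (Finset.erase_ssubset hc) ⟨a, Finset.mem_erase.mpr ⟨hac, ha⟩⟩
  refine ⟨_, hS.apply_three hs₁ hs₂ hs₃, fun i hi => hf.apply_eq_of_two ?_⟩
  have h₁ : i ≠ a → s₁ i = x i := fun h => hx₁ i (Finset.mem_erase.mpr ⟨h, hi⟩)
  have h₂ : i ≠ b → s₂ i = x i := fun h => hx₂ i (Finset.mem_erase.mpr ⟨h, hi⟩)
  have h₃ : i ≠ c → s₃ i = x i := fun h => hx₃ i (Finset.mem_erase.mpr ⟨h, hi⟩)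
  by_cases hia : i = a
  · subst hia; exact .inr (.inr ⟨h₂ hab, h₃ hac⟩)
  by_cases hib : i = b
  · subst hib; exact .inr (.inl ⟨h₁ hia, h₃ hbc⟩)
  · exact .inl ⟨h₁ hia, h₂ hib⟩

theorem IsMajorityOp.twoDecomposable [LinearOrder ι] [Fintype ι] [Nontrivial ι]
    (hf : IsMajorityOp f) (hS : CptClosed f S) : TwoDecomposable S := by
  ext x
  refine ⟨fun hx i j _ => ⟨x, hx, rfl, rfl⟩, fun hx => ?_⟩
  have hpair : ∀ i j, ∃ s ∈ S, s i = x i ∧ s j = x j := by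
    intro i j
    rcases lt_trichotomy i j with h | rfl | h
    · exact hx i j h
    · obtain ⟨k, hk⟩ := exists_ne i
      rcases hk.lt_or_gt with h | h
      · obtain ⟨s, hs, -, hi⟩ := hx k i h
        exact ⟨s, hs, hi, hi⟩
      · obtain ⟨s, hs, hi, -⟩ := hx i k h
        exact ⟨s, hs, hi, hi⟩
    · obtain ⟨s, hs, hj, hi⟩ := hx j i h
      exact ⟨s, hs, hi, hj⟩
  obtain ⟨s, hs, hsx⟩ := hf.exists_mem_eqOn_finset hS hpair Finset.univ Finset.univ_nonempty
  rwa [← funext fun i => hsx i (Finset.mem_univ i)]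

end Majority

lemma joinPairs_projSet {n : ℕ} (S : Set (Fin n → ℤ)) :
    joinPairs (fun i j => projSet i j S) =
      {x | ∀ i j, i < j → ∃ s ∈ S, s i = x i ∧ s j = x j} := by
  simp only [joinPairs, mem_projSet_iff]

/-- `S` is closed under some majority operation iff
`S = ⋈_{i<j} cl_g(π_{i,j}(S))` for some majority operation `g`. -/
theorem stmt_11 {n : ℕ} (hn : 2 ≤ n) (S : Set (Fin n → ℤ)) :
    MajClosed S ↔
      ∃ g : (Fin 3 → ℤ) → ℤ, IsMajorityOp g ∧
        S = joinPairs (fun i j => clOp g (projSet i j S)) := by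
  have : Nontrivial (Fin n) := Fin.nontrivial_iff_two_le.mpr hn
  constructor
  · rintro ⟨f, hf, hS⟩
    refine ⟨f, hf, ?_⟩
    simp only [(hS.projSet _ _).clOp_eq, joinPairs_projSet]
    exact hf.twoDecomposable hS
  · rintro ⟨g, hg, hS⟩
    exact ⟨g, hg, hS ▸ cptClosed_joinPairs fun i j _ => cptClosed_clOp g _⟩
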